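/- Naturality of the de Rham homomorphism under smooth maps: for any smooth map F : M → N of smooth manifolds and any k ≥ 0, the diagram relating pullbacks commutes, i.e., 𝓘 ∘ F* = F* ∘ 𝓘 as maps H_Ω^k(N) → H^k(M; ℝ). Concretely, for every closed k-form ω on N and smooth k-simplex σ in M one has ∫_σ F*ω = ∫_{F∘σ} ω, and hence 𝓘(F*[ω])[c] = 𝓘([ω])(F_*[c]) for every singular homology class [c] ∈ H_k(M). -/

import Mathlib

open Set Function TopologicalSpace Topology
open scoped Manifold

noncomputable section DeRhamPrelude

/-! ### Differential forms on manifolds -/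

/-- The space of (not necessarily smooth) differential `k`-forms on a manifold `M` modeled on
`(E, H)` via `I`: at each point, a continuous alternating `k`-linear map on the tangent space
(which is definitionally `E`). -/
abbrev Form {E H : Type*} [NormedAddCommGroup E] [NormedSpace ℝ E] [TopologicalSpace H]
    (I : ModelWithCorners ℝ E H) (M : Type*) [TopologicalSpace M] [ChartedSpace H M]
    (k : ℕ) : Type _ :=
  M → E [⋀^Fin k]→L[ℝ] ℝ

variable {E H : Type*} [NormedAddCommGroup E] [NormedSpace ℝ E] [TopologicalSpace H]

variable (I : ModelWithCorners ℝ E H) (M : Type*) [TopologicalSpace M] [ChartedSpace H M]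

/-- The local coordinate representative of a `k`-form, in the chart around `x`: the pullback of
`ω` to the model space `E` by the inverse of the extended chart at `x`. -/
def localRep {k : ℕ} (ω : Form I M k) (x : M) :
    E → ContinuousMultilinearMap ℝ (fun _ : Fin k => E) ℝ :=
  fun z => ((ω ((extChartAt I x).symm z)).compContinuousLinearMap
      (mfderiv 𝓘(ℝ, E) I (extChartAt I x).symm z)).toContinuousMultilinearMap

/-- A differential form is smooth if all its local coordinate representatives are smooth. -/
def IsSmoothForm {k : ℕ} (ω : Form I M k) : Prop :=
  ∀ x : M, ContDiffWithinAt ℝ (⊤ : ℕ∞) (localRep I M ω x) (Set.range I) (extChartAt I x x)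

/-- The exterior derivative of a form on the model space: the antisymmetrization of the
(Fréchet) derivative, `dω(v₀, …, v_k) = ∑ i (-1)ⁱ (Dω(vᵢ))(v₀, …, v̂ᵢ, …, v_k)`. -/
def extDerivModel {k : ℕ} (F : E → ContinuousMultilinearMap ℝ (fun _ : Fin k => E) ℝ)
    (s : Set E) (z : E) : E [⋀^Fin (k+1)]→L[ℝ] ℝ :=
  ((k.factorial : ℝ)⁻¹) •
    ContinuousMultilinearMap.alternatization ((fderivWithin ℝ F s z).uncurryLeft)

/-- The exterior derivative of a differential `k`-form on a manifold, computed in the chart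
around each point. -/
def extDerivM {k : ℕ} (ω : Form I M k) : Form I M (k+1) :=
  fun x =>
    (extDerivModel (localRep I M ω x) (Set.range I)
        ((extChartAt I x) x)).compContinuousLinearMap
      (mfderiv I 𝓘(ℝ, E) (extChartAt I x) x)

/-- A `k`-form is exact if it is the exterior derivative of a smooth `(k-1)`-form; by convention
(`Ω⁻¹ = 0`) an exact `0`-form is zero. -/
def IsExactForm : ∀ {k : ℕ}, Form I M k → Prop
  | 0, ω => ω = 0
  | (_ + 1), ω => ∃ τ, IsSmoothForm I M τ ∧ extDerivM I M τ = ω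

/-- The space `Z^k(M)` of closed (smooth) `k`-forms, as a subspace of all `k`-forms. -/
def closedForms (k : ℕ) : Submodule ℝ (Form I M k) :=
  Submodule.span ℝ {ω | IsSmoothForm I M ω ∧ extDerivM I M ω = 0}

/-- The space `B^k(M) = d(Ω^{k-1}(M))` of exact `k`-forms. -/
def exactForms (k : ℕ) : Submodule ℝ (Form I M k) :=
  Submodule.span ℝ {ω | IsExactForm I M ω}

/-- The `k`-th de Rham cohomology vector space `H^k(M) = Z^k(M)/B^k(M)`. -/
abbrev deRhamH (k : ℕ) : Type _ :=
  @HasQuotient.Quotient ↥(closedForms I M k) _ (@Submodule.hasQuotient ℝ _ _ (Submodule.addCommGroup _) _)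
    (Submodule.comap (closedForms I M k).subtype (exactForms I M k))

/-- The de Rham cohomology class of a closed form. -/
def deRhamClass {k : ℕ} (ω : Form I M k) (hω : ω ∈ closedForms I M k) : deRhamH I M k :=
  Submodule.Quotient.mk ⟨ω, hω⟩

/-! ### Compactly supported de Rham cohomology -/

/-- A compactly supported `k`-form is exact (in the compactly supported sense) if it is the
exterior derivative of a smooth compactly supported `(k-1)`-form. -/
def IsExactFormC : ∀ {k : ℕ}, Form I M k → Prop
  | 0, ω => ω = 0
  | (_ + 1), ω => ∃ τ, IsSmoothForm I M τ ∧ HasCompactSupport τ ∧ extDerivM I M τ = ω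

/-- The space `Z_c^k(M)` of closed smooth compactly supported `k`-forms. -/
def closedFormsC (k : ℕ) : Submodule ℝ (Form I M k) :=
  Submodule.span ℝ {ω | IsSmoothForm I M ω ∧ HasCompactSupport ω ∧ extDerivM I M ω = 0}

/-- The space `B_c^k(M) = d(Ω_c^{k-1}(M))` of compactly-exact `k`-forms. -/
def exactFormsC (k : ℕ) : Submodule ℝ (Form I M k) :=
  Submodule.span ℝ {ω | IsExactFormC I M ω}

/-- The `k`-th compactly supported de Rham cohomology `H_c^k(M)`. -/
abbrev deRhamHc (k : ℕ) : Type _ :=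
  @HasQuotient.Quotient ↥(closedFormsC I M k) _ (@Submodule.hasQuotient ℝ _ _ (Submodule.addCommGroup _) _)
    (Submodule.comap (closedFormsC I M k).subtype (exactFormsC I M k))

/-- The compactly supported de Rham cohomology class of a closed compactly supported form. -/
def deRhamClassC {k : ℕ} (ω : Form I M k) (hω : ω ∈ closedFormsC I M k) : deRhamHc I M k :=
  Submodule.Quotient.mk ⟨ω, hω⟩

/-! ### Pullback of forms -/

variable {E' H' N : Type*} [NormedAddCommGroup E'] [NormedSpace ℝ E'] [TopologicalSpace H']
  [TopologicalSpace N]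

/-- Pullback of a differential form along a (smooth) map: `(f^*ω)_x = ω_{f(x)} ∘ (df_x)`. -/
def pullbackForm (J : ModelWithCorners ℝ E' H') [ChartedSpace H' N]
    (f : M → N) {k : ℕ} (ω : Form J N k) : Form I M k :=
  fun x => (ω (f x)).compContinuousLinearMap (mfderiv I J f x)

/-! ### Singular chains and singular homology -/

/-- The standard `k`-simplex, as a subset of `ℝ^{k+1}`. -/
def stdSimplexSet (k : ℕ) : Set (Fin (k+1) → ℝ) := stdSimplex ℝ (Fin (k+1))

/-- A singular `k`-simplex in `X` is a continuous map from the standard `k`-simplex to `X`. -/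
abbrev SSimplex (X : Type*) [TopologicalSpace X] (k : ℕ) : Type _ := C(stdSimplexSet k, X)

/-- The group of singular `k`-chains: formal `ℤ`-linear combinations of singular simplices. -/
abbrev SChain (X : Type*) [TopologicalSpace X] (k : ℕ) : Type _ := SSimplex X k →₀ ℤ

/-- The `i`-th face inclusion `Δ_k → Δ_{k+1}` (as a map of ambient coordinates):
the affine map sending the vertices of `Δ_k` to all vertices of `Δ_{k+1}` except the `i`-th. -/
def faceFun (k : ℕ) (i : Fin (k+2)) (y : Fin (k+1) → ℝ) : Fin (k+2) → ℝ :=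
  fun j => ∑ l ∈ Finset.univ.filter (fun l => i.succAbove l = j), y l

theorem faceFun_mem (k : ℕ) (i : Fin (k+2)) (y : Fin (k+1) → ℝ) (hy : y ∈ stdSimplexSet k) :
    faceFun k i y ∈ stdSimplexSet (k+1) := by
  constructor
  · intro j
    exact Finset.sum_nonneg fun l _ => hy.1 l
  · unfold faceFun
    rw [Finset.sum_fiberwise]
    exact hy.2

/-- The `i`-th face inclusion `Δ_k → Δ_{k+1}` as a continuous map. -/
def faceMap (k : ℕ) (i : Fin (k+2)) : C(stdSimplexSet k, stdSimplexSet (k+1)) where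
  toFun := fun y => ⟨faceFun k i y.1, faceFun_mem k i y.1 y.2⟩
  continuous_toFun := by
    apply Continuous.subtype_mk
    apply continuous_pi
    intro j
    exact continuous_finset_sum _ fun l _ => (continuous_apply l).comp continuous_subtype_val

/-- The boundary operator on singular chains, `∂σ = ∑ i (-1)ⁱ (σ ∘ faceᵢ)`. -/
def sBoundary (X : Type*) [TopologicalSpace X] (k : ℕ) : SChain X (k+1) →ₗ[ℤ] SChain X k :=
  Finsupp.lift _ ℤ _ fun σ =>
    ∑ i : Fin (k+2), ((-1 : ℤ)^(i : ℕ)) • Finsupp.single (σ.comp (faceMap k i)) 1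

/-- The subgroup of singular `k`-cycles (`∂c = 0`; in degree `0`, every chain is a cycle). -/
def sCycles (X : Type*) [TopologicalSpace X] : ∀ k : ℕ, Submodule ℤ (SChain X k)
  | 0 => ⊤
  | (k+1) => LinearMap.ker (sBoundary X (k+1-1))

/-- The subgroup of singular `k`-boundaries. -/
def sBoundaries (X : Type*) [TopologicalSpace X] (k : ℕ) : Submodule ℤ (SChain X k) :=
  LinearMap.range (sBoundary X k)

/-- The `k`-th singular homology group of `X` (with integer coefficients):
cycles modulo boundaries. -/
abbrev SingularH (X : Type*) [TopologicalSpace X] (k : ℕ) : Type _ :=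
  ↥(sCycles X k) ⧸ Submodule.comap (sCycles X k).subtype (sBoundaries X k)

/-- The homology class of a cycle. -/
def singularClass {X : Type*} [TopologicalSpace X] {k : ℕ} (c : SChain X k)
    (hc : c ∈ sCycles X k) : SingularH X k :=
  Submodule.Quotient.mk ⟨c, hc⟩

/-- Pushforward of singular chains along a continuous map. -/
def pushChain {X Y : Type*} [TopologicalSpace X] [TopologicalSpace Y] (φ : C(X, Y)) (k : ℕ) :
    SChain X k →ₗ[ℤ] SChain Y k :=
  Finsupp.lift _ ℤ _ fun σ => Finsupp.single (φ.comp σ) 1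

/-! ### Smooth singular chains and integration of forms over chains -/

variable {E H : Type*} [NormedAddCommGroup E] [NormedSpace ℝ E] [TopologicalSpace H]

variable (I : ModelWithCorners ℝ E H) (M : Type*) [TopologicalSpace M] [ChartedSpace H M]

/-- A singular simplex in a manifold is smooth if it extends to a smooth map on an open
neighbourhood of the standard simplex. -/
def IsSmoothSimplex {k : ℕ} (σ : SSimplex M k) : Prop :=
  ∃ g : (Fin (k+1) → ℝ) → M, ∃ U : Set (Fin (k+1) → ℝ), IsOpen U ∧ stdSimplexSet k ⊆ U ∧
    ContMDiffOn 𝓘(ℝ, Fin (k+1) → ℝ) I (⊤ : ℕ∞) g U ∧ ∀ p : stdSimplexSet k, g p.1 = σ p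

/-- The subgroup of smooth singular `k`-chains `C_k^∞(M)`: chains all of whose simplices
are smooth. -/
def smoothChains (k : ℕ) : Submodule ℤ (SChain M k) where
  carrier := {c | ∀ σ ∈ c.support, IsSmoothSimplex I M σ}
  add_mem' := fun {a b} ha hb σ hσ => by
    classical
    rcases Finset.mem_union.1 (Finsupp.support_add hσ) with h | h
    exacts [ha σ h, hb σ h]
  zero_mem' := by simp
  smul_mem' := fun n c hc σ hσ => by
    classical
    exact hc σ (Finsupp.support_smul hσ)

/-- The affine parametrization of the standard `k`-simplex by the corner domain
`{x ∈ ℝ^k | xᵢ ≥ 0, ∑ xᵢ ≤ 1}`. -/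
def simplexParam (k : ℕ) : (Fin k → ℝ) → (Fin (k+1) → ℝ) :=
  fun x => Fin.cons (1 - ∑ i, x i) x

/-- The corner domain in `ℝ^k` parametrizing the standard `k`-simplex. -/
def paramDomain (k : ℕ) : Set (Fin k → ℝ) := {x | (∀ i, 0 ≤ x i) ∧ ∑ i, x i ≤ 1}

-- The integral `∫_σ ω = ∫_{Δ_k} σ^*ω` of a `k`-form over a smooth singular `k`-simplex,
-- computed via a smooth extension of `σ` and the standard parametrization of `Δ_k`
-- (and `0` by convention for non-smooth simplices).
open Classical in
def simplexIntegral {k : ℕ} (ω : Form I M k) (σ : SSimplex M k) : ℝ :=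
  if h : IsSmoothSimplex I M σ then
    ∫ x in paramDomain k,
      (ω (h.choose (simplexParam k x)))
        (fun i => mfderiv 𝓘(ℝ, Fin k → ℝ) I (h.choose ∘ simplexParam k) x (Pi.single i 1))
  else 0

/-- The integral of a `k`-form over a singular `k`-chain, extended linearly from simplices. -/
def chainIntegral {k : ℕ} (ω : Form I M k) (c : SChain M k) : ℝ :=
  c.sum fun σ n => (n : ℝ) * simplexIntegral I M ω σ

/-! ### The de Rham homomorphism and de Rham manifolds -/

/-- A manifold `M` is a de Rham manifold if, for every `k ≥ 0`, the de Rham homomorphism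
`𝓘 : H_Ω^k(M) → H^k(M; ℝ) ≅ Hom(H_k(M), ℝ)`, `[ω] ↦ ([c] ↦ ∫_c ω)`, is an isomorphism;
we express this by requiring a linear isomorphism acting as `[ω] ↦ ([c] ↦ ∫_c ω)` on classes
of closed forms and of smooth cycles. -/
def IsDeRhamManifold : Prop :=
  ∀ k : ℕ, ∃ Φ : deRhamH I M k ≃ₗ[ℝ] (SingularH M k →ₗ[ℤ] ℝ),
    ∀ (ω : Form I M k) (hω : ω ∈ closedForms I M k) (c : SChain M k) (hc : c ∈ sCycles M k),
      c ∈ smoothChains I M k →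
      Φ (deRhamClass I M ω hω) (singularClass c hc) = chainIntegral I M ω c

/-! ### Auxiliary lemmas for naturality -/

/-- The open "interior" of the parameter domain. -/
def goodSet (k : ℕ) : Set (Fin k → ℝ) := {x | (∀ i, 0 < x i) ∧ ∑ i, x i < 1}

lemma isOpen_goodSet (k : ℕ) : IsOpen (goodSet k) := by
  have h1 : IsOpen {x : Fin k → ℝ | ∀ i, 0 < x i} := by
    rw [Set.setOf_forall]
    exact isOpen_iInter_of_finite fun i => isOpen_lt continuous_const (continuous_apply i)
  have h2 : IsOpen {x : Fin k → ℝ | ∑ i, x i < 1} :=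
    isOpen_lt (continuous_finset_sum _ fun i _ => continuous_apply i) continuous_const
  exact h1.inter h2

lemma goodSet_subset (k : ℕ) : goodSet k ⊆ paramDomain k :=
  fun _ hx => ⟨fun i => (hx.1 i).le, hx.2.le⟩

lemma simplexParam_mem {k : ℕ} {x : Fin k → ℝ} (hx : x ∈ paramDomain k) :
    simplexParam k x ∈ stdSimplexSet k := by
  constructor
  · intro j
    refine Fin.cases ?_ ?_ j
    · simpa [simplexParam] using hx.2
    · intro i; simpa [simplexParam] using hx.1 i
  · simp [simplexParam, Fin.sum_cons]

lemma isClosed_paramDomain (k : ℕ) : IsClosed (paramDomain k) := by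
  have h1 : IsClosed {x : Fin k → ℝ | ∀ i, 0 ≤ x i} := by
    rw [Set.setOf_forall]
    exact isClosed_iInter fun i => isClosed_le continuous_const (continuous_apply i)
  have h2 : IsClosed {x : Fin k → ℝ | ∑ i, x i ≤ 1} :=
    isClosed_le (continuous_finset_sum _ fun i _ => continuous_apply i) continuous_const
  exact h1.inter h2

lemma convex_paramDomain (k : ℕ) : Convex ℝ (paramDomain k) := by
  intro x hx y hy a b ha hb hab
  constructor
  · intro i
    have h1 := hx.1 i; have h2 := hy.1 i
    simp only [Pi.add_apply, Pi.smul_apply, smul_eq_mul]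
    nlinarith
  · have h1 := hx.2; have h2 := hy.2
    simp only [Pi.add_apply, Pi.smul_apply, smul_eq_mul]
    rw [Finset.sum_add_distrib, ← Finset.mul_sum, ← Finset.mul_sum]
    nlinarith

lemma interior_subset_goodSet (k : ℕ) : interior (paramDomain k) ⊆ goodSet k := by
  intro x hx
  have hxD : x ∈ paramDomain k := interior_subset hx
  obtain ⟨ε, hε, hball⟩ := Metric.mem_nhds_iff.1 (mem_interior_iff_mem_nhds.1 hx)
  have hball' : ∀ (i : Fin k) (t : ℝ), |t| < ε → Function.update x i (x i + t) ∈ paramDomain k := by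
    intro i t ht
    apply hball
    rw [Metric.mem_ball, dist_pi_lt_iff hε]
    intro j
    by_cases hj : j = i
    · subst hj
      rw [Function.update_self, Real.dist_eq]
      have h : x j + t - x j = t := by ring
      rwa [h]
    · simp [Function.update_of_ne hj, hε]
  constructor
  · intro i
    have hy := hball' i (-(ε / 2)) (by rw [abs_neg, abs_of_pos (by linarith)]; linarith)
    have := hy.1 i
    rw [Function.update_self] at this
    linarith
  · rcases Nat.eq_zero_or_pos k with hk | hk
    · subst hk; simp
    · set i : Fin k := ⟨0, hk⟩
      have hy := hball' i (ε / 2) (by rw [abs_of_pos (by linarith)]; linarith)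
      have hsum := hy.2
      rw [Finset.sum_update_of_mem (Finset.mem_univ i)] at hsum
      have hx2 : ∑ j, x j = x i + ∑ j ∈ Finset.univ \ {i}, x j :=
        (Finset.add_sum_erase _ _ (Finset.mem_univ i)).symm.trans (by
          rw [Finset.sum_erase_eq_sub (Finset.mem_univ i),
            Finset.sum_sdiff_eq_sub (Finset.singleton_subset_iff.2 (Finset.mem_univ i))]
          simp)
      linarith [hsum, hx2.ge, hx2.le]

open MeasureTheory in
lemma ae_goodSet (k : ℕ) :
    ∀ᵐ x : Fin k → ℝ, x ∈ paramDomain k → x ∈ goodSet k := by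
  have h0 : volume (paramDomain k \ goodSet k) = 0 := by
    refine measure_mono_null ?_ ((convex_paramDomain k).addHaar_frontier volume)
    intro x hx
    exact ⟨subset_closure hx.1, fun h => hx.2 (interior_subset_goodSet k h)⟩
  filter_upwards [measure_eq_zero_iff_ae_notMem.1 h0] with x hx hxp
  by_contra h
  exact hx ⟨hxp, h⟩

lemma contMDiff_simplexParam (k : ℕ) :
    ContMDiff 𝓘(ℝ, Fin k → ℝ) 𝓘(ℝ, Fin (k+1) → ℝ) (⊤ : ℕ∞) (simplexParam k) := by
  apply ContDiff.contMDiff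
  apply contDiff_pi.2
  intro j
  refine Fin.cases ?_ ?_ j
  · have h : (fun x : Fin k → ℝ => simplexParam k x 0) = fun x => 1 - ∑ i, x i := by
      funext x; simp [simplexParam]
    rw [h]
    exact contDiff_const.sub (ContDiff.sum fun i _ => contDiff_apply ℝ ℝ i)
  · intro i
    have h : (fun x : Fin k → ℝ => simplexParam k x i.succ) = fun x => x i := by
      funext x; simp [simplexParam]
    rw [h]
    exact contDiff_apply ℝ ℝ i

open MeasureTheory in
/-- The integral of a form over a smooth simplex can be computed with any chosen smooth
extension. -/
lemma simplexIntegral_eq_of_ext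
    {E H : Type*} [NormedAddCommGroup E] [NormedSpace ℝ E] [TopologicalSpace H]
    (I : ModelWithCorners ℝ E H) (M : Type*) [TopologicalSpace M] [ChartedSpace H M]
    {k : ℕ} (ω : Form I M k) (σ : SSimplex M k)
    (g : (Fin (k+1) → ℝ) → M) (U : Set (Fin (k+1) → ℝ)) (hU : IsOpen U)
    (hsub : stdSimplexSet k ⊆ U)
    (hg : ContMDiffOn 𝓘(ℝ, Fin (k+1) → ℝ) I (⊤ : ℕ∞) g U)
    (hgs : ∀ p : stdSimplexSet k, g p.1 = σ p) :
    simplexIntegral I M ω σ =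
      ∫ x in paramDomain k, (ω (g (simplexParam k x)))
        (fun i => mfderiv 𝓘(ℝ, Fin k → ℝ) I (g ∘ simplexParam k) x (Pi.single i 1)) := by
  have h : IsSmoothSimplex I M σ := ⟨g, U, hU, hsub, hg, hgs⟩
  rw [simplexIntegral, dif_pos h]
  obtain ⟨U', hU', hsub', hg', hgs'⟩ := h.choose_spec
  apply setIntegral_congr_ae (isClosed_paramDomain k).measurableSet
  filter_upwards [ae_goodSet k] with x hx hxp
  have hxg := hx hxp
  have heq : (h.choose ∘ simplexParam k) =ᶠ[nhds x] (g ∘ simplexParam k) := by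
    filter_upwards [(isOpen_goodSet k).mem_nhds hxg] with y hy
    have hys := simplexParam_mem (goodSet_subset k hy)
    show h.choose (simplexParam k y) = g (simplexParam k y)
    rw [hgs' ⟨_, hys⟩, hgs ⟨_, hys⟩]
  have hval : h.choose (simplexParam k x) = g (simplexParam k x) := heq.eq_of_nhds
  rw [heq.mfderiv_eq, hval]
  rfl

/-- **Naturality of the de Rham homomorphism under smooth maps.** For a smooth map
`F : M → N`, pulling back closed forms commutes with integration: for every closed smooth
`k`-form `ω` on `N` and smooth `k`-simplex `σ` in `M`, `∫_σ F^*ω = ∫_{F∘σ} ω`; hence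
`𝓘(F^*[ω])[c] = 𝓘([ω])(F_*[c])` for every smooth `k`-cycle `c` in `M`. -/
theorem deRham_hom_naturality
    {E H : Type*} [NormedAddCommGroup E] [NormedSpace ℝ E] [TopologicalSpace H]
    (I : ModelWithCorners ℝ E H) (M : Type*) [TopologicalSpace M] [ChartedSpace H M]
    [IsManifold I (⊤ : ℕ∞) M]
    {E' H' : Type*} [NormedAddCommGroup E'] [NormedSpace ℝ E'] [TopologicalSpace H']
    (J : ModelWithCorners ℝ E' H') (N : Type*) [TopologicalSpace N] [ChartedSpace H' N]
    [IsManifold J (⊤ : ℕ∞) N]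
    (F : M → N) (hF : ContMDiff I J (⊤ : ℕ∞) F) (k : ℕ) :
    (∀ ω : Form J N k, IsSmoothForm J N ω → extDerivM J N ω = 0 →
      ∀ σ : SSimplex M k, IsSmoothSimplex I M σ →
        simplexIntegral I M (pullbackForm I M J F ω) σ =
          simplexIntegral J N ω ((⟨F, hF.continuous⟩ : C(M, N)).comp σ)) ∧
    (∀ ω : Form J N k, IsSmoothForm J N ω → extDerivM J N ω = 0 →
      ∀ c : SChain M k, c ∈ sCycles M k → c ∈ smoothChains I M k →
        chainIntegral I M (pullbackForm I M J F ω) c =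
          chainIntegral J N ω (pushChain (⟨F, hF.continuous⟩ : C(M, N)) k c)) := by
  classical
  set φ : C(M, N) := ⟨F, hF.continuous⟩ with hφ
  have part1 : ∀ ω : Form J N k, ∀ σ : SSimplex M k, IsSmoothSimplex I M σ →
      simplexIntegral I M (pullbackForm I M J F ω) σ = simplexIntegral J N ω (φ.comp σ) := by
    intro ω σ hσ
    obtain ⟨g, U, hU, hsub, hg, hgs⟩ := hσ
    have hFg : ContMDiffOn 𝓘(ℝ, Fin (k+1) → ℝ) J (⊤ : ℕ∞) (F ∘ g) U := hF.comp_contMDiffOn hg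
    have hgs2 : ∀ p : stdSimplexSet k, (F ∘ g) p.1 = (φ.comp σ) p := fun p => by
      simp [hφ, Function.comp, hgs p]
    rw [simplexIntegral_eq_of_ext I M _ σ g U hU hsub hg hgs,
      simplexIntegral_eq_of_ext J N ω (φ.comp σ) (F ∘ g) U hU hsub hFg hgs2]
    apply MeasureTheory.setIntegral_congr_ae (isClosed_paramDomain k).measurableSet
    filter_upwards [ae_goodSet k] with x hx hxp
    have hparam_x : simplexParam k x ∈ stdSimplexSet k := simplexParam_mem hxp
    have hgd : MDifferentiableAt 𝓘(ℝ, Fin k → ℝ) I (g ∘ simplexParam k) x := by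
      have h1 : ContMDiffAt 𝓘(ℝ, Fin (k+1) → ℝ) I (⊤ : ℕ∞) g (simplexParam k x) :=
        hg.contMDiffAt (hU.mem_nhds (hsub hparam_x))
      have h2 : ContMDiffAt 𝓘(ℝ, Fin k → ℝ) 𝓘(ℝ, Fin (k+1) → ℝ) (⊤ : ℕ∞) (simplexParam k) x :=
        (contMDiff_simplexParam k).contMDiffAt
      exact (h1.comp x h2).mdifferentiableAt (by simp)
    have hFd : MDifferentiableAt I J F (g (simplexParam k x)) :=
      (hF (g (simplexParam k x))).mdifferentiableAt (by simp)
    have hcomp : mfderiv 𝓘(ℝ, Fin k → ℝ) J ((F ∘ g) ∘ simplexParam k) x =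
        (mfderiv I J F (g (simplexParam k x))).comp
          (mfderiv 𝓘(ℝ, Fin k → ℝ) I (g ∘ simplexParam k) x) := by
      rw [Function.comp_assoc]
      exact mfderiv_comp x hFd hgd
    rw [hcomp]
    simp only [pullbackForm, ContinuousAlternatingMap.compContinuousLinearMap_apply,
      ContinuousLinearMap.comp_apply, Function.comp_apply]
    rfl
  constructor
  · intro ω _ _ σ hσ
    exact part1 ω σ hσ
  · intro ω _ _ c _ hc
    let L : SChain N k →ₗ[ℤ] ℝ :=
      Finsupp.lift ℝ ℤ (SSimplex N k) fun τ => simplexIntegral J N ω τ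
    have hLc : ∀ c' : SChain N k, chainIntegral J N ω c' = L c' := by
      intro c'
      rw [chainIntegral]
      show _ = Finsupp.lift ℝ ℤ (SSimplex N k) (fun τ => simplexIntegral J N ω τ) c'
      rw [Finsupp.lift_apply]
      exact Finsupp.sum_congr fun σ _ => by rw [zsmul_eq_mul]
    have hLsingle : ∀ τ : SSimplex N k, L (Finsupp.single τ 1) = simplexIntegral J N ω τ := by
      intro τ
      show Finsupp.lift ℝ ℤ (SSimplex N k) (fun τ => simplexIntegral J N ω τ)
        (Finsupp.single τ 1) = _
      rw [Finsupp.lift_apply, Finsupp.sum_single_index (by simp)]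
      simp
    have hpush : pushChain φ k c = c.sum fun σ n => n • Finsupp.single (φ.comp σ) 1 := by
      rw [pushChain, Finsupp.lift_apply]
    rw [hLc, hpush, map_finsuppSum]
    rw [chainIntegral]
    refine Finsupp.sum_congr fun σ hσ => ?_
    rw [map_zsmul, hLsingle, zsmul_eq_mul, part1 ω σ (hc σ hσ)]
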